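/- Projection-based CUR perturbation bound (Theorem 4.1, second form): Under the stated assumptions, ‖A − C̃ C̃† Ã R̃† R̃‖_F ≤ ‖E‖_F · (‖W_{k,I}†‖_F + ‖V_{k,J}†‖_F + 3). -/

import Mathlib

open Matrix

noncomputable section

variable {𝕂 : Type} [RCLike 𝕂]

/-- The Frobenius norm of a matrix. -/
noncomputable def frobNorm {m n : ℕ} (M : Matrix (Fin m) (Fin n) 𝕂) : ℝ :=
  Real.sqrt (∑ i, ∑ j, ‖M i j‖ ^ 2)

/-- The `i`-th largest singular value of a matrix (1-indexed), i.e. the `i`-th largest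
square root of an eigenvalue of `Mᴴ * M`. -/
noncomputable def sigma {m n : ℕ} (M : Matrix (Fin m) (Fin n) 𝕂) (i : ℕ) : ℝ :=
  ((List.ofFn fun j : Fin n =>
      Real.sqrt ((Matrix.isHermitian_conjTranspose_mul_self M).eigenvalues j)).insertionSort
      (· ≥ ·)).getD (i - 1) 0

/-- The spectral norm: the largest singular value. -/
noncomputable def specNorm {m n : ℕ} (M : Matrix (Fin m) (Fin n) 𝕂) : ℝ := sigma M 1

/-- `P` is the Moore–Penrose pseudoinverse of `M`: the four Penrose conditions. -/
def IsMPInv {m n : ℕ} (M : Matrix (Fin m) (Fin n) 𝕂) (P : Matrix (Fin n) (Fin m) 𝕂) : Prop :=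
  M * P * M = M ∧ P * M * P = P ∧ (M * P)ᴴ = M * P ∧ (P * M)ᴴ = P * M

/-- `Mr` is a truncated SVD of order `r` of `M`, i.e. a best rank-`r` approximation of `M`
(equivalently, a matrix obtained from an SVD of `M` by keeping the `r` largest singular
values and zeroing out the rest). -/
def IsTruncSVD {m n : ℕ} (M Mr : Matrix (Fin m) (Fin n) 𝕂) (r : ℕ) : Prop :=
  Mr.rank ≤ r ∧ ∀ B : Matrix (Fin m) (Fin n) 𝕂, B.rank ≤ r → frobNorm (M - Mr) ≤ frobNorm (M - B)

/-- `Mt = [M]_τ`: the matrix obtained from an SVD of `M` by setting to zero every singular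
value strictly less than `τ` (i.e. keeping exactly the singular values `≥ τ`). -/
def IsThresh {m n : ℕ} (M Mt : Matrix (Fin m) (Fin n) 𝕂) (τ : ℝ) : Prop :=
  IsTruncSVD M Mt (Nat.card {i : Fin (min m n) // τ ≤ sigma M ((i : ℕ) + 1)})

/-- The volume of a matrix: the product of its `min p q` largest singular values. -/
noncomputable def vol {p q : ℕ} (M : Matrix (Fin p) (Fin q) 𝕂) : ℝ :=
  ∏ i ∈ Finset.range (min p q), sigma M (i + 1)

end

/-!
With the orthogonal projections `P = C̃ C̃†` and `Q = R̃† R̃`,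
`A - P Ã Q = (1 - P) A + P A (1 - Q) - P E Q`.
Since `rank C = rank R = k`, the thin SVD factors `A` through its column and row samples:
`A = C (V_{k,J}†)ᴴ V_kᴴ` and `A = W_k W_{k,I}† R`. As `(1 - P) C̃ = 0` and `R̃ (1 - Q) = 0`,
`C` and `R` may be replaced by `-E_J` and `-E_I` in the first two terms. Orthogonal projections
and matrices with orthonormal columns do not increase the Frobenius norm, so the three terms are
bounded by `‖E‖ ‖V_{k,J}†‖`, `‖W_{k,I}†‖ ‖E‖` and `‖E‖`.
-/

section FrobeniusNorm

attribute [local instance] Matrix.frobeniusNormedAddCommGroup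

variable {𝕂 : Type} [RCLike 𝕂] {l m n p q : ℕ}

theorem frobNorm_eq_norm (M : Matrix (Fin m) (Fin n) 𝕂) : frobNorm M = ‖M‖ := by
  simp [frobNorm, frobenius_norm_def, Real.sqrt_eq_rpow]

theorem frobNorm_nonneg (M : Matrix (Fin m) (Fin n) 𝕂) : 0 ≤ frobNorm M :=
  Real.sqrt_nonneg _

theorem frobNorm_add_le (M N : Matrix (Fin m) (Fin n) 𝕂) :
    frobNorm (M + N) ≤ frobNorm M + frobNorm N := by
  simpa only [frobNorm_eq_norm] using norm_add_le M N

theorem frobNorm_neg (M : Matrix (Fin m) (Fin n) 𝕂) : frobNorm (-M) = frobNorm M := by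
  simpa only [frobNorm_eq_norm] using norm_neg M

theorem frobNorm_sub_le (M N : Matrix (Fin m) (Fin n) 𝕂) :
    frobNorm (M - N) ≤ frobNorm M + frobNorm N := by
  simpa only [frobNorm_eq_norm] using norm_sub_le M N

theorem frobNorm_mul_le (M : Matrix (Fin l) (Fin m) 𝕂) (N : Matrix (Fin m) (Fin n) 𝕂) :
    frobNorm (M * N) ≤ frobNorm M * frobNorm N := by
  simpa only [frobNorm_eq_norm] using frobenius_norm_mul M N

theorem frobNorm_conjTranspose (M : Matrix (Fin m) (Fin n) 𝕂) : frobNorm Mᴴ = frobNorm M := by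
  simpa only [frobNorm_eq_norm] using frobenius_norm_conjTranspose M

theorem frobNorm_submatrix_le (M : Matrix (Fin m) (Fin n) 𝕂) {f : Fin p → Fin m}
    {g : Fin q → Fin n} (hf : Function.Injective f) (hg : Function.Injective g) :
    frobNorm (M.submatrix f g) ≤ frobNorm M := by
  have sum_comp_le : ∀ {a b : ℕ} (e : Fin a → Fin b), Function.Injective e →
      ∀ h : Fin b → ℝ, (∀ i, 0 ≤ h i) → ∑ i, h (e i) ≤ ∑ i, h i := fun e he h h0 =>
    (Finset.sum_map Finset.univ ⟨e, he⟩ h).symm.trans_le (Finset.sum_le_univ_sum_of_nonneg h0)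
  refine Real.sqrt_le_sqrt ((sum_comp_le f hf _ fun i => by positivity).trans' ?_)
  exact Finset.sum_le_sum fun i _ =>
    sum_comp_le g hg (fun j => ‖M (f i) j‖ ^ 2) fun j => by positivity

theorem frobNorm_sq_eq_re_trace (M : Matrix (Fin m) (Fin n) 𝕂) :
    frobNorm M ^ 2 = RCLike.re (Mᴴ * M).trace := by
  rw [frobNorm, Real.sq_sqrt (by positivity), trace, map_sum, Finset.sum_comm]
  refine Finset.sum_congr rfl fun j _ => ?_
  simp only [diag_apply, mul_apply, conjTranspose_apply, map_sum, RCLike.star_def,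
    RCLike.conj_mul]
  norm_cast

theorem frobNorm_mul_of_conjTranspose_mul_self_eq_one {W : Matrix (Fin m) (Fin n) 𝕂}
    (hW : Wᴴ * W = 1) (M : Matrix (Fin n) (Fin l) 𝕂) : frobNorm (W * M) = frobNorm M := by
  rw [← sq_eq_sq₀ (frobNorm_nonneg _) (frobNorm_nonneg _), frobNorm_sq_eq_re_trace,
    frobNorm_sq_eq_re_trace, conjTranspose_mul, Matrix.mul_assoc, ← Matrix.mul_assoc Wᴴ, hW,
    Matrix.one_mul]

theorem IsStarProjection.frobNorm_mul_le {P : Matrix (Fin m) (Fin m) 𝕂} (hP : IsStarProjection P)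
    (X : Matrix (Fin m) (Fin n) 𝕂) : frobNorm (P * X) ≤ frobNorm X := by
  have gram : ∀ {Q : Matrix (Fin m) (Fin m) 𝕂}, IsStarProjection Q →
      (Q * X)ᴴ * (Q * X) = Xᴴ * Q * X := fun {Q} hQ => by
    rw [conjTranspose_mul, ← star_eq_conjTranspose, hQ.isSelfAdjoint.star_eq, Matrix.mul_assoc,
      ← Matrix.mul_assoc Q, hQ.isIdempotentElem.eq, Matrix.mul_assoc]
  have pythagoras : frobNorm (P * X) ^ 2 + frobNorm ((1 - P) * X) ^ 2 = frobNorm X ^ 2 := by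
    rw [frobNorm_sq_eq_re_trace, frobNorm_sq_eq_re_trace, frobNorm_sq_eq_re_trace, gram hP,
      gram hP.one_sub, ← map_add, ← trace_add, Matrix.mul_sub, Matrix.sub_mul, Matrix.mul_one,
      add_sub_cancel]
  refine (pow_le_pow_iff_left₀ (frobNorm_nonneg _) (frobNorm_nonneg _) two_ne_zero).mp ?_
  linarith [sq_nonneg (frobNorm ((1 - P) * X))]

theorem IsStarProjection.frobNorm_mul_le' {P : Matrix (Fin n) (Fin n) 𝕂} (hP : IsStarProjection P)
    (X : Matrix (Fin m) (Fin n) 𝕂) : frobNorm (X * P) ≤ frobNorm X := by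
  rw [← frobNorm_conjTranspose, conjTranspose_mul, ← star_eq_conjTranspose P,
    hP.isSelfAdjoint.star_eq, ← frobNorm_conjTranspose X]
  exact hP.frobNorm_mul_le Xᴴ

end FrobeniusNorm

namespace IsMPInv

variable {𝕂 : Type} [RCLike 𝕂] {l m n : ℕ} {M : Matrix (Fin m) (Fin n) 𝕂}
  {P : Matrix (Fin n) (Fin m) 𝕂}

theorem isStarProjection_mul_pinv (h : IsMPInv M P) : IsStarProjection (M * P) :=
  ⟨by rw [IsIdempotentElem, ← Matrix.mul_assoc, h.1], h.2.2.1⟩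

theorem isStarProjection_pinv_mul (h : IsMPInv M P) : IsStarProjection (P * M) :=
  ⟨by rw [IsIdempotentElem, ← Matrix.mul_assoc, h.2.1], h.2.2.2⟩

open scoped ComplexOrder in
theorem pinv_mul_eq_one (h : IsMPInv M P) (hM : M.rank = n) : P * M = 1 := by
  have hGram : IsUnit (Mᴴ * M) := by
    rw [← mulVec_surjective_iff_isUnit]
    change Function.Surjective (Mᴴ * M).mulVecLin
    rw [← LinearMap.range_eq_top]
    apply Submodule.eq_top_of_finrank_eq
    rw [← rank, rank_conjTranspose_mul_self, hM, Module.finrank_fin_fun]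
  apply hGram.mul_left_cancel
  rw [Matrix.mul_one, Matrix.mul_assoc, ← Matrix.mul_assoc M, h.1]

theorem frobNorm_one_sub_mul_pinv_mul_le (h : IsMPInv M P) (C : Matrix (Fin m) (Fin n) 𝕂)
    (X : Matrix (Fin n) (Fin l) 𝕂) :
    frobNorm ((1 - M * P) * (C * X)) ≤ frobNorm (M - C) * frobNorm X := by
  have hkill : (1 - M * P) * (C * X) = -((1 - M * P) * ((M - C) * X)) := by
    have hann : (1 - M * P) * M = 0 := by rw [Matrix.sub_mul, Matrix.one_mul, h.1, sub_self]
    rw [Matrix.sub_mul M C, Matrix.mul_sub, ← Matrix.mul_assoc (1 - M * P) M, hann,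
      Matrix.zero_mul, zero_sub, neg_neg]
  calc frobNorm ((1 - M * P) * (C * X))
      = frobNorm ((1 - M * P) * ((M - C) * X)) := by rw [hkill, frobNorm_neg]
    _ ≤ frobNorm ((M - C) * X) := h.isStarProjection_mul_pinv.one_sub.frobNorm_mul_le _
    _ ≤ frobNorm (M - C) * frobNorm X := frobNorm_mul_le _ _

theorem frobNorm_mul_mul_one_sub_pinv_mul_le (h : IsMPInv M P) (R : Matrix (Fin m) (Fin n) 𝕂)
    (X : Matrix (Fin l) (Fin m) 𝕂) :
    frobNorm ((X * R) * (1 - P * M)) ≤ frobNorm X * frobNorm (M - R) := by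
  have hkill : (X * R) * (1 - P * M) = -((X * (M - R)) * (1 - P * M)) := by
    have hann : M * (1 - P * M) = 0 := by
      rw [Matrix.mul_sub, Matrix.mul_one, ← Matrix.mul_assoc, h.1, sub_self]
    rw [Matrix.mul_sub X M R, Matrix.sub_mul, Matrix.mul_assoc X M, hann, Matrix.mul_zero,
      zero_sub, neg_neg]
  calc frobNorm ((X * R) * (1 - P * M))
      = frobNorm ((X * (M - R)) * (1 - P * M)) := by rw [hkill, frobNorm_neg]
    _ ≤ frobNorm (X * (M - R)) := h.isStarProjection_pinv_mul.one_sub.frobNorm_mul_le' _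
    _ ≤ frobNorm X * frobNorm (M - R) := frobNorm_mul_le _ _

end IsMPInv

section CUR

variable {𝕂 : Type} [RCLike 𝕂] {m n k p q : ℕ}

theorem frobNorm_sub_mul_pinv_mul_mul_pinv_mul_le {A E : Matrix (Fin m) (Fin n) 𝕂}
    {C Ct : Matrix (Fin m) (Fin q) 𝕂} {Ctp : Matrix (Fin q) (Fin m) 𝕂}
    {R Rt : Matrix (Fin p) (Fin n) 𝕂} {Rtp : Matrix (Fin n) (Fin p) 𝕂}
    (hCt : IsMPInv Ct Ctp) (hRt : IsMPInv Rt Rtp)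
    {X : Matrix (Fin q) (Fin n) 𝕂} {Y : Matrix (Fin m) (Fin p) 𝕂}
    (hX : C * X = A) (hY : Y * R = A) :
    frobNorm (A - Ct * Ctp * (A + E) * Rtp * Rt) ≤
      frobNorm (Ct - C) * frobNorm X + frobNorm Y * frobNorm (Rt - R) + frobNorm E := by
  have hP := hCt.isStarProjection_mul_pinv
  have hQ := hRt.isStarProjection_pinv_mul
  have hsplit : A - Ct * Ctp * (A + E) * Rtp * Rt =
      (1 - Ct * Ctp) * A + Ct * Ctp * (A * (1 - Rtp * Rt)) - Ct * Ctp * E * (Rtp * Rt) := by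
    simp only [Matrix.mul_sub, Matrix.sub_mul, Matrix.mul_add, Matrix.add_mul, Matrix.one_mul,
      Matrix.mul_one, Matrix.mul_assoc]
    abel
  rw [hsplit]
  refine (frobNorm_sub_le _ _).trans (add_le_add ((frobNorm_add_le _ _).trans ?_) ?_)
  · refine add_le_add ?_ ((hP.frobNorm_mul_le _).trans ?_)
    · rw [← hX]
      exact hCt.frobNorm_one_sub_mul_pinv_mul_le C X
    · rw [← hY]
      exact hRt.frobNorm_mul_mul_one_sub_pinv_mul_le R Y
  · exact (hQ.frobNorm_mul_le' _).trans (hP.frobNorm_mul_le _)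

open scoped ComplexOrder in
theorem submatrix_id_mul_eq_of_eq_mul_conjTranspose {A : Matrix (Fin m) (Fin n) 𝕂}
    {B : Matrix (Fin m) (Fin k) 𝕂} {V : Matrix (Fin n) (Fin k) 𝕂} (hA : A = B * Vᴴ)
    {κ : Fin q → Fin n} {Vp : Matrix (Fin k) (Fin q) 𝕂} (hVp : IsMPInv (V.submatrix κ id) Vp)
    (hrank : (A.submatrix id κ).rank = k) : A.submatrix id κ * (Vpᴴ * Vᴴ) = A := by
  have hcols : A.submatrix id κ = B * (V.submatrix κ id)ᴴ := by rw [hA]; rfl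
  have hrankV : (V.submatrix κ id).rank = k := by
    refine le_antisymm (rank_le_width _) ?_
    calc k = (B * (V.submatrix κ id)ᴴ).rank := by rw [← hcols, hrank]
      _ ≤ (V.submatrix κ id).rank := (rank_mul_le_right _ _).trans_eq (rank_conjTranspose _)
  rw [hcols, Matrix.mul_assoc, ← Matrix.mul_assoc _ Vpᴴ, ← conjTranspose_mul,
    hVp.pinv_mul_eq_one hrankV, conjTranspose_one, Matrix.one_mul, hA]

theorem mul_submatrix_id_eq_of_eq_mul {A : Matrix (Fin m) (Fin n) 𝕂}
    {W : Matrix (Fin m) (Fin k) 𝕂} {B : Matrix (Fin k) (Fin n) 𝕂} (hA : A = W * B)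
    {ι : Fin p → Fin m} {Wp : Matrix (Fin k) (Fin p) 𝕂} (hWp : IsMPInv (W.submatrix ι id) Wp)
    (hrank : (A.submatrix ι id).rank = k) : W * Wp * A.submatrix ι id = A := by
  have hrows : A.submatrix ι id = W.submatrix ι id * B := by rw [hA]; rfl
  have hrankW : (W.submatrix ι id).rank = k := by
    refine le_antisymm (rank_le_width _) ?_
    calc k = (W.submatrix ι id * B).rank := by rw [← hrows, hrank]
      _ ≤ (W.submatrix ι id).rank := rank_mul_le_left _ _
  rw [hrows, Matrix.mul_assoc, ← Matrix.mul_assoc Wp, hWp.pinv_mul_eq_one hrankW, Matrix.one_mul,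
    hA]

end CUR

theorem projection_cur_perturbation_svd_general {𝕂 : Type} [RCLike 𝕂] {m n k p q : ℕ}
    (A E : Matrix (Fin m) (Fin n) 𝕂)
    (ι : Fin p ↪ Fin m) (κ : Fin q ↪ Fin n)
    (hrankC : (A.submatrix id ⇑κ).rank = k)
    (hrankR : (A.submatrix ⇑ι id).rank = k)
    (W : Matrix (Fin m) (Fin k) 𝕂) (V : Matrix (Fin n) (Fin k) 𝕂) (d : Fin k → ℝ)
    (hW : Wᴴ * W = 1) (hV : Vᴴ * V = 1)
    (hSVD : A = W * Matrix.diagonal (fun i => (d i : 𝕂)) * Vᴴ)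
    (Wp : Matrix (Fin k) (Fin p) 𝕂) (hWp : IsMPInv (W.submatrix ⇑ι id) Wp)
    (Vp : Matrix (Fin k) (Fin q) 𝕂) (hVp : IsMPInv (V.submatrix ⇑κ id) Vp)
    (Ctp : Matrix (Fin q) (Fin m) 𝕂) (hCtp : IsMPInv ((A + E).submatrix id ⇑κ) Ctp)
    (Rtp : Matrix (Fin n) (Fin p) 𝕂) (hRtp : IsMPInv ((A + E).submatrix ⇑ι id) Rtp) :
    frobNorm (A - (A + E).submatrix id ⇑κ * Ctp * (A + E) * Rtp * (A + E).submatrix ⇑ι id) ≤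
      frobNorm E * (frobNorm Wp + frobNorm Vp + 3) := by
  have hC : A.submatrix id κ * (Vpᴴ * Vᴴ) = A :=
    submatrix_id_mul_eq_of_eq_mul_conjTranspose hSVD hVp hrankC
  have hR : W * Wp * A.submatrix ι id = A :=
    mul_submatrix_id_eq_of_eq_mul (by rw [hSVD, Matrix.mul_assoc]) hWp hrankR
  have hVp_norm : frobNorm (Vpᴴ * Vᴴ) = frobNorm Vp := by
    rw [← conjTranspose_mul, frobNorm_conjTranspose,
      frobNorm_mul_of_conjTranspose_mul_self_eq_one hV]
  have hEJ : (A + E).submatrix id κ - A.submatrix id κ = E.submatrix id κ :=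
    add_sub_cancel_left _ _
  have hEI : (A + E).submatrix ι id - A.submatrix ι id = E.submatrix ι id :=
    add_sub_cancel_left _ _
  calc _ ≤ frobNorm ((A + E).submatrix id κ - A.submatrix id κ) * frobNorm (Vpᴴ * Vᴴ)
          + frobNorm (W * Wp) * frobNorm ((A + E).submatrix ι id - A.submatrix ι id)
          + frobNorm E :=
        frobNorm_sub_mul_pinv_mul_mul_pinv_mul_le hCtp hRtp hC hR
    _ = frobNorm (E.submatrix id κ) * frobNorm Vp + frobNorm Wp * frobNorm (E.submatrix ι id)
          + frobNorm E := by
        rw [hEJ, hEI, hVp_norm, frobNorm_mul_of_conjTranspose_mul_self_eq_one hW]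
    _ ≤ frobNorm E * (frobNorm Wp + frobNorm Vp + 3) := by
        have hEJ_le := frobNorm_submatrix_le E Function.injective_id κ.injective
        have hEI_le := frobNorm_submatrix_le E ι.injective Function.injective_id
        linarith [mul_le_mul_of_nonneg_right hEJ_le (frobNorm_nonneg Vp),
          mul_le_mul_of_nonneg_left hEI_le (frobNorm_nonneg Wp), frobNorm_nonneg E]

/-- Theorem 4.1 (second form): projection-based CUR perturbation bound via singular vectors. -/
theorem projection_cur_perturbation_svd {𝕂 : Type} [RCLike 𝕂] {m n k p q : ℕ}
    (A E : Matrix (Fin m) (Fin n) 𝕂)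
    (hrankA : A.rank = k)
    (ι : Fin p ↪ Fin m) (κ : Fin q ↪ Fin n)
    (hrankC : (A.submatrix id ⇑κ).rank = k)
    (hrankU : (A.submatrix ⇑ι ⇑κ).rank = k)
    (hrankR : (A.submatrix ⇑ι id).rank = k)
    (W : Matrix (Fin m) (Fin k) 𝕂) (V : Matrix (Fin n) (Fin k) 𝕂) (d : Fin k → ℝ)
    (hW : Wᴴ * W = 1) (hV : Vᴴ * V = 1)
    (hmono : ∀ i j : Fin k, i ≤ j → d j ≤ d i) (hpos : ∀ i, 0 < d i)
    (hSVD : A = W * Matrix.diagonal (fun i => (d i : 𝕂)) * Vᴴ)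
    (Wp : Matrix (Fin k) (Fin p) 𝕂) (hWp : IsMPInv (W.submatrix ⇑ι id) Wp)
    (Vp : Matrix (Fin k) (Fin q) 𝕂) (hVp : IsMPInv (V.submatrix ⇑κ id) Vp)
    (Ctp : Matrix (Fin q) (Fin m) 𝕂) (hCtp : IsMPInv ((A + E).submatrix id ⇑κ) Ctp)
    (Rtp : Matrix (Fin n) (Fin p) 𝕂) (hRtp : IsMPInv ((A + E).submatrix ⇑ι id) Rtp) :
    frobNorm (A - (A + E).submatrix id ⇑κ * Ctp * (A + E) * Rtp * (A + E).submatrix ⇑ι id) ≤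
      frobNorm E * (frobNorm Wp + frobNorm Vp + 3) :=
  projection_cur_perturbation_svd_general A E ι κ hrankC hrankR W V d hW hV hSVD Wp hWp Vp hVp Ctp
    hCtp Rtp hRtp
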